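/- The number 7 + 4√3 is an eigenvalue of the 6×6 matrix B = [[3,2,4,0,0,2],[6,3,6,0,0,4],[0,2,3,2,4,0],[0,4,6,3,6,0],[4,0,0,2,3,2],[6,0,0,4,6,3]], i.e. det(B − (7+4√3)·I) = 0. -/
import Mathlib


open Matrix

theorem cons_val_five' {α : Type*} {m : ℕ} (x : α)
    (u : Fin (m + 5) → α) :
    Matrix.vecCons x u 5 = Matrix.vecHead (Matrix.vecTail (Matrix.vecTail
      (Matrix.vecTail (Matrix.vecTail u)))) :=
  rfl

theorem stmt_4 :
    ((!![3,2,4,0,0,2; 6,3,6,0,0,4; 0,2,3,2,4,0; 0,4,6,3,6,0;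
        4,0,0,2,3,2; 6,0,0,4,6,3] : Matrix (Fin 6) (Fin 6) ℝ)
      - (7 + 4 * Real.sqrt 3) • (1 : Matrix (Fin 6) (Fin 6) ℝ)).det = 0 := by
  have h3 : Real.sqrt 3 ^ 2 = 3 := Real.sq_sqrt (by norm_num)
  rw [← Matrix.exists_mulVec_eq_zero_iff]
  refine ⟨![Real.sqrt 3, 3, Real.sqrt 3, 3, Real.sqrt 3, 3], ?_, ?_⟩
  · intro h
    have : (3 : ℝ) = 0 := congrFun h 1
    norm_num at this
  · funext i
    fin_cases i <;>
      simp (config := { decide := true })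
        [Matrix.mulVec, dotProduct, Fin.sum_univ_succ, Matrix.sub_apply,
         Matrix.smul_apply, Matrix.one_apply, Matrix.cons_val_zero,
         Matrix.cons_val_succ, cons_val_five', Matrix.vecHead, Matrix.vecTail] <;>
      first
        | linear_combination (-4 : ℝ) * h3
        | linear_combination (4 : ℝ) * h3
        | ring
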